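/- For every n ≥ 0 and every 0 ≤ k ≤ n, the number of length-n edge paths from the root (0,0) to the vertex (n,k) of the Euler graph — i.e., the cardinality of the set of finite words (x_0,…,x_{n−1}) with x_i ∈ Fin(i+2) whose associated vertex labels satisfy k_n = k — equals the Eulerian number A(n,k), the number of permutations σ of {0,1,…,n} with exactly k rises (indices 0 ≤ i < n with σ(i) < σ(i+1)). -/

import Mathlib

open MeasureTheory Filter

/-- The Euler path space. -/
abbrev EulerPath : Type := ∀ n : ℕ, Fin (n + 2)

/-- Vertex labels: `kv x n` is the `k` with the path `x` passing through vertex `(n,k)`. -/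
def kv (x : EulerPath) : ℕ → ℕ
  | 0 => 0
  | n + 1 => if (x n : ℕ) ≤ kv x n then kv x n else kv x n + 1

/-- Extend a finite word `(x_0, …, x_{n-1})` with `x_i ∈ Fin (i+2)` to an infinite path
(by zeros); since `kv · n` only depends on the first `n` coordinates, this lets us speak
of the vertex labels of a finite edge path. -/
def extendWord {n : ℕ} (c : ∀ i : Fin n, Fin (i.1 + 2)) : EulerPath :=
  fun i => if h : i < n then c ⟨i, h⟩ else 0

/-- The Eulerian number `A(n,k)`: the number of permutations `σ` of `{0,1,…,n}` with
exactly `k` rises, i.e. indices `0 ≤ i < n` with `σ i < σ (i+1)`. -/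
noncomputable def eulerianNumber (n k : ℕ) : ℕ :=
  Nat.card {σ : Equiv.Perm (Fin (n + 1)) //
    (Finset.univ.filter fun i : Fin n => σ i.castSucc < σ i.succ).card = k}

/-! A word of length `n + 1` is a word of length `n` followed by a letter `x ∈ Fin (n + 2)`,
and the label `k` stays put for the `k + 1` letters `x ≤ k` and grows by one otherwise. A
permutation of `{0, …, n + 1}` is a permutation `σ` of `{0, …, n}` with the maximum inserted at
one of `n + 2` positions; if `σ` has `r` rises, inserting at the front or right after a rise keeps
`r` rises (`r + 1` positions) and every other position adds one. Matching, for each `σ`, the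
letters `x ≤ r` with the rise-preserving positions gives inductively a bijection from words to
permutations carrying the label of a word to the number of rises of its image. -/

open Finset Function Equiv

lemma Fin.insertNth_succ_apply_zero {β : Type*} {m : ℕ} (p : Fin (m + 1)) (x : β)
    (f : Fin (m + 1) → β) : (Fin.insertNth p.succ x f : Fin (m + 2) → β) 0 = f 0 := by
  rw [← Fin.cons_self_tail f, Fin.insertNth_succ_cons]
  simp

section Rises

variable {α : Type*} [LinearOrder α]

def rises {m : ℕ} (f : Fin (m + 1) → α) : ℕ :=
  #{i : Fin m | f i.castSucc < f i.succ}

lemma rises_le {m : ℕ} (f : Fin (m + 1) → α) : rises f ≤ m :=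
  (card_filter_le _ _).trans (card_fin m).le

lemma rises_fin_one (f : Fin 1 → α) : rises f = 0 :=
  Nat.le_zero.mp (rises_le f)

lemma rises_comp_of_strictMono {β : Type*} [LinearOrder β] {e : α → β} (he : StrictMono e)
    {m : ℕ} (f : Fin (m + 1) → α) : rises (e ∘ f) = rises f := by
  simp [rises, he.lt_iff_lt]

lemma rises_cons {m : ℕ} (a : α) (f : Fin (m + 1) → α) :
    rises (Fin.cons a f : Fin (m + 2) → α) = (if a < f 0 then 1 else 0) + rises f := by
  rw [rises, Fin.card_filter_univ_succ']
  simp [rises]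

variable {M : α}

lemma rises_insertNth_zero {m : ℕ} {f : Fin (m + 1) → α} (hM : ∀ i, f i < M) :
    rises (Fin.insertNth 0 M f : Fin (m + 2) → α) = rises f := by
  simp [rises_cons, (hM 0).not_gt]

lemma rises_insertNth_mem_Icc {m : ℕ} {f : Fin (m + 1) → α} (hM : ∀ i, f i < M)
    (p : Fin (m + 2)) :
    rises (Fin.insertNth p M f : Fin (m + 2) → α) ∈ Set.Icc (rises f) (rises f + 1) := by
  induction m with
  | zero =>
    have h0 := rises_le f
    have h1 := rises_le (Fin.insertNth p M f : Fin 2 → α)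
    simp only [Set.mem_Icc]
    omega
  | succ m ih =>
    cases f using Fin.consCases with
    | cons a g =>
    have ha : a < M := by simpa using hM 0
    have hg : ∀ i, g i < M := fun i => by simpa using hM i.succ
    cases p using Fin.cases with
    | zero => simp only [rises_insertNth_zero hM, Set.mem_Icc]; omega
    | succ q =>
      rw [Fin.insertNth_succ_cons, rises_cons, rises_cons]
      cases q using Fin.cases with
      | zero =>
        simp only [Fin.insertNth_zero', Fin.cons_zero, rises_cons, (hg 0).not_gt, ha, ↓reduceIte,
          Set.mem_Icc]
        split_ifs <;> omega
      | succ j =>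
        have := ih hg j.succ
        simp only [Set.mem_Icc, Fin.insertNth_succ_apply_zero] at this ⊢
        omega

lemma card_filter_rises_insertNth_eq {m : ℕ} {f : Fin (m + 1) → α} (hM : ∀ i, f i < M) :
    #{p : Fin (m + 2) | rises (Fin.insertNth p M f : Fin (m + 2) → α) = rises f} =
      rises f + 1 := by
  induction m with
  | zero =>
    cases f using Fin.consCases with
    | cons a g =>
    have ha : a < M := by simpa using hM 0
    rw [Fin.card_filter_univ_succ', Fin.card_filter_univ_succ', rises_insertNth_zero hM,
      Fin.insertNth_succ_cons]
    simp [rises_cons, rises_fin_one, ha]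
  | succ m ih =>
    cases f using Fin.consCases with
    | cons a g =>
    have ha : a < M := by simpa using hM 0
    have hg : ∀ i, g i < M := fun i => by simpa using hM i.succ
    have hsucc := ih hg
    rw [Fin.card_filter_univ_succ', rises_insertNth_zero hg] at hsucc
    rw [Fin.card_filter_univ_succ', rises_insertNth_zero hM, Fin.card_filter_univ_succ']
    simp only [Fin.insertNth_succ_cons, rises_cons, Fin.insertNth_zero',
      Fin.cons_zero, Fin.insertNth_succ_apply_zero, ha, (hg 0).not_gt, add_right_inj,
      ↓reduceIte] at hsucc ⊢
    split_ifs <;> omega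

end Rises

lemma Fin.insertNth_injective {β : Type*} {n : ℕ} {f : Fin n → β} (hf : Injective f) {x : β}
    (hx : x ∉ Set.range f) (p : Fin (n + 1)) :
    Injective (Fin.insertNth p x f : Fin (n + 1) → β) := by
  intro i j hij
  induction i using p.succAboveCases <;> induction j using p.succAboveCases <;>
    simp_all [hf.eq_iff, eq_comm]

lemma Equiv.Perm.exists_iff_of_card_filter_eq {α : Type*} [Fintype α] {P Q : α → Prop}
    [DecidablePred P] [DecidablePred Q] (h : #{a | P a} = #{a | Q a}) :
    ∃ π : Perm α, ∀ a, P a ↔ Q (π a) := by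
  have hP : Fintype.card {a // P a} = Fintype.card {a // Q a} := by
    simpa only [Fintype.card_subtype] using h
  have hnotP : Fintype.card {a // ¬P a} = Fintype.card {a // ¬Q a} := by
    rw [Fintype.card_subtype_compl, Fintype.card_subtype_compl, hP]
  refine ⟨Equiv.subtypeCongr (Fintype.equivOfCardEq hP) (Fintype.equivOfCardEq hnotP),
    fun a => ?_⟩
  by_cases ha : P a
  · simpa [Equiv.subtypeCongr, ha] using (Fintype.equivOfCardEq hP ⟨a, ha⟩).2
  · simpa [Equiv.subtypeCongr, ha] using (Fintype.equivOfCardEq hnotP ⟨a, ha⟩).2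

section InsertMax

variable {n : ℕ}

noncomputable def insertMax (σ : Perm (Fin (n + 1))) (p : Fin (n + 2)) : Perm (Fin (n + 2)) :=
  Equiv.ofBijective (Fin.insertNth p (Fin.last _) (Fin.castSucc ∘ σ))
    (Finite.injective_iff_bijective.mp <|
      Fin.insertNth_injective ((Fin.castSucc_injective _).comp σ.injective)
        (by rintro ⟨i, hi⟩; exact (Fin.castSucc_lt_last _).ne hi) p)

lemma coe_insertMax (σ : Perm (Fin (n + 1))) (p : Fin (n + 2)) :
    ⇑(insertMax σ p) =
      Fin.insertNth (α := fun _ => Fin (n + 2)) p (Fin.last _) (Fin.castSucc ∘ σ) :=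
  rfl

lemma insertMax_apply_self (σ : Perm (Fin (n + 1))) (p : Fin (n + 2)) :
    insertMax σ p p = Fin.last _ := by
  rw [coe_insertMax, Fin.insertNth_apply_same]

lemma insertMax_inj {σ τ : Perm (Fin (n + 1))} {p q : Fin (n + 2)} :
    insertMax σ p = insertMax τ q ↔ σ = τ ∧ p = q := by
  refine ⟨fun h => ?_, fun ⟨hστ, hpq⟩ => hστ ▸ hpq ▸ rfl⟩
  have hpq : p = q := by
    rw [(insertMax τ q).eq_symm_apply.mpr (insertMax_apply_self τ q), ← h]
    exact (insertMax σ p).eq_symm_apply.mpr (insertMax_apply_self σ p)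
  subst hpq
  have h' := congrArg DFunLike.coe h
  rw [coe_insertMax, coe_insertMax] at h'
  have hστ := (Fin.insertNth_injective2 h').2
  exact ⟨Equiv.ext fun i => Fin.castSucc_injective _ (congrFun hστ i), rfl⟩

noncomputable def insertMaxEquiv (n : ℕ) :
    Perm (Fin (n + 1)) × Fin (n + 2) ≃ Perm (Fin (n + 2)) :=
  Equiv.ofBijective (fun q => insertMax q.1 q.2) <|
    (Fintype.bijective_iff_injective_and_card _).mpr
      ⟨fun _ _ h => Prod.ext_iff.mpr (insertMax_inj.mp h), by
        simp [Fintype.card_perm, Nat.factorial_succ]; ring⟩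

lemma insertMaxEquiv_apply (σ : Perm (Fin (n + 1))) (p : Fin (n + 2)) :
    insertMaxEquiv n (σ, p) = insertMax σ p :=
  rfl

lemma exists_perm_rises_insertMax (σ : Perm (Fin (n + 1))) :
    ∃ π : Perm (Fin (n + 2)), ∀ x,
      rises (insertMax σ (π x)) = if (x : ℕ) ≤ rises σ then rises σ else rises σ + 1 := by
  have hlast : ∀ i, (Fin.castSucc ∘ σ) i < Fin.last _ := fun i => Fin.castSucc_lt_last _
  have hmono : rises (Fin.castSucc ∘ σ) = rises σ :=
    rises_comp_of_strictMono Fin.strictMono_castSucc _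
  have hbounds (p : Fin (n + 2)) := rises_insertNth_mem_Icc hlast p
  have hgood := card_filter_rises_insertNth_eq hlast
  rw [hmono] at hbounds hgood
  have hsmall : #{x : Fin (n + 2) | (x : ℕ) ≤ rises σ} = rises σ + 1 := by
    simp only [← Nat.lt_succ_iff, Fin.card_filter_val_lt]
    have := rises_le σ
    omega
  obtain ⟨π, hπ⟩ := Equiv.Perm.exists_iff_of_card_filter_eq (hsmall.trans hgood.symm)
  refine ⟨π, fun x => ?_⟩
  rw [coe_insertMax]
  split_ifs with hx
  · exact (hπ x).1 hx
  · have := (hπ x).not.1 hx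
    have := hbounds (π x)
    simp only [Set.mem_Icc] at this
    omega

end InsertMax

lemma kv_congr {x y : EulerPath} {m : ℕ} (h : ∀ i < m, x i = y i) : kv x m = kv y m := by
  induction m with
  | zero => rfl
  | succ m ih => simp only [kv, ih fun i hi => h i (by omega), h m (by omega)]

lemma kv_extendWord_snoc {n : ℕ} (c : ∀ i : Fin n, Fin (i.1 + 2)) (x : Fin (n + 2)) :
    kv (extendWord (Fin.snoc (α := fun i : Fin (n + 1) => Fin (i.1 + 2)) c x)) (n + 1) =
      if (x : ℕ) ≤ kv (extendWord c) n then kv (extendWord c) n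
      else kv (extendWord c) n + 1 := by
  have hinit : kv (extendWord (Fin.snoc (α := fun i : Fin (n + 1) => Fin (i.1 + 2)) c x)) n =
      kv (extendWord c) n :=
    kv_congr fun i hi => by
      simp only [extendWord, dif_pos hi, dif_pos (hi.trans n.lt_succ_self)]
      exact Fin.snoc_castSucc (α := fun i : Fin (n + 1) => Fin (i.1 + 2)) (i := ⟨i, hi⟩) ..
  have hlast : extendWord (Fin.snoc (α := fun i : Fin (n + 1) => Fin (i.1 + 2)) c x) n = x := by
    simp only [extendWord, dif_pos n.lt_succ_self]
    exact Fin.snoc_last (α := fun i : Fin (n + 1) => Fin (i.1 + 2)) ..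
  simp only [kv, hinit, hlast]

theorem exists_equiv_perm_rises_eq_kv (n : ℕ) :
    ∃ e : (∀ i : Fin n, Fin (i.1 + 2)) ≃ Perm (Fin (n + 1)),
      ∀ c, rises (e c) = kv (extendWord c) n := by
  induction n with
  | zero => exact ⟨Fintype.equivOfCardEq (by simp), fun c => rises_fin_one _⟩
  | succ n ih =>
    obtain ⟨e, he⟩ := ih
    choose π hπ using fun σ : Perm (Fin (n + 1)) => exists_perm_rises_insertMax σ
    refine ⟨(Fin.snocEquiv _).symm.trans <| (Equiv.prodComm _ _).trans <|
      (Equiv.prodShear e fun c => π (e c)).trans (insertMaxEquiv n), fun c => ?_⟩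
    obtain ⟨⟨x, c⟩, rfl⟩ := (Fin.snocEquiv _).surjective c
    simp [Fin.snocEquiv, kv_extendWord_snoc, insertMaxEquiv_apply, hπ, he]

theorem euler_path_count_eq_eulerianNumber_general (n k : ℕ) :
    Nat.card {c : ∀ i : Fin n, Fin (i.1 + 2) // kv (extendWord c) n = k} =
      eulerianNumber n k := by
  obtain ⟨e, he⟩ := exists_equiv_perm_rises_eq_kv n
  exact Nat.card_congr (e.subtypeEquiv fun c => by rw [← he]; rfl)

/-- The number of length-`n` edge paths from the root `(0,0)` to the vertex `(n,k)` of
the Euler graph equals the Eulerian number `A(n,k)`. -/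
theorem euler_path_count_eq_eulerianNumber (n k : ℕ) (hk : k ≤ n) :
    Nat.card {c : ∀ i : Fin n, Fin (i.1 + 2) // kv (extendWord c) n = k} =
      eulerianNumber n k :=
  euler_path_count_eq_eulerianNumber_general n k
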